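/- Fix a vector $\vec{n}=(n_1,\ldots,n_d)$ of positive integers with $\mathtt S = n_1 + \cdots + n_d$. For any constant $L \geq 0$ and exponents $\sigma \in (0,d)$ and $s > \sigma + \mathtt S - d$, every Borel measure $\vartheta$ supported on $[0,1]^d$ with total mass $\|\vartheta\| \leq 1$ and satisfying $\vartheta(Q) \leq L\,\ell(Q)^s$ for every anisotropic dyadic box $Q \in \mathcal{D}^*[\vec{n}]$ has $\sigma$-dimensional energy $I_\sigma(\vartheta) = \iint |x-y|^{-\sigma}\,d\vartheta(x)\,d\vartheta(y)$ bounded by $\dfrac{6^d L}{1 - 2^{\sigma + \mathtt S - d - s}}$. -/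

import Mathlib

open scoped ENNReal
open MeasureTheory

noncomputable section

/-- The anisotropic dyadic box of generation `j` anchored at lattice point `a`,
as a subset of Euclidean space. -/
def dyadicBoxE (d : ℕ) (n : Fin d → ℕ) (j : ℤ) (a : Fin d → ℤ) :
    Set (EuclideanSpace ℝ (Fin d)) :=
  {x | ∀ i, (a i : ℝ) * (2 : ℝ) ^ (-(n i : ℤ) * j) ≤ x i ∧
        x i < ((a i : ℝ) + 1) * (2 : ℝ) ^ (-(n i : ℤ) * j)}

namespace Stmt8Aux

lemma floor_range {u v : ℝ} {M : ℕ} (h : |u - v| < M) :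
    ⌊v⌋ - M ≤ ⌊u⌋ ∧ ⌊u⌋ ≤ ⌊v⌋ + M := by
  obtain ⟨h1, h2⟩ := abs_lt.mp h
  have hu1 := Int.floor_le u
  have hu2 := Int.lt_floor_add_one u
  have hv1 := Int.floor_le v
  have hv2 := Int.lt_floor_add_one v
  constructor
  · have h3 : (⌊v⌋ : ℝ) < ⌊u⌋ + 1 + M := by linarith
    have h4 : ⌊v⌋ < ⌊u⌋ + 1 + M := by exact_mod_cast h3
    omega
  · have h3 : (⌊u⌋ : ℝ) < ⌊v⌋ + 1 + M := by linarith
    have h4 : ⌊u⌋ < ⌊v⌋ + 1 + M := by exact_mod_cast h3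
    omega

lemma mem_box_floor (d : ℕ) (n : Fin d → ℕ) (j : ℤ) (x : EuclideanSpace ℝ (Fin d)) :
    x ∈ dyadicBoxE d n j (fun i => ⌊x i * (2:ℝ) ^ ((n i : ℤ) * j)⌋) := by
  intro i
  have hpos : (0:ℝ) < (2:ℝ) ^ ((n i : ℤ) * j) := zpow_pos (by norm_num) _
  have hneg : (2:ℝ) ^ (-(n i : ℤ) * j) = ((2:ℝ) ^ ((n i : ℤ) * j))⁻¹ := by
    rw [neg_mul, zpow_neg]
  have h1 : (⌊x i * (2:ℝ) ^ ((n i : ℤ) * j)⌋ : ℝ) ≤ x i * (2:ℝ) ^ ((n i : ℤ) * j) :=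
    Int.floor_le _
  have h2 : x i * (2:ℝ) ^ ((n i : ℤ) * j) < ⌊x i * (2:ℝ) ^ ((n i : ℤ) * j)⌋ + 1 :=
    Int.lt_floor_add_one _
  simp only []
  rw [hneg]
  constructor
  · rw [← div_eq_mul_inv, div_le_iff₀ hpos]; exact h1
  · rw [← div_eq_mul_inv, lt_div_iff₀ hpos]; exact h2

lemma coord_le_dist (d : ℕ) (x y : EuclideanSpace ℝ (Fin d)) (i : Fin d) :
    |x i - y i| ≤ dist x y := by
  rw [EuclideanSpace.dist_eq]
  have h1 : Real.sqrt (dist (x i) (y i) ^ 2) = |x i - y i| := by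
    rw [Real.dist_eq, Real.sqrt_sq_eq_abs, abs_abs]
  rw [← h1]
  apply Real.sqrt_le_sqrt
  exact Finset.single_le_sum (f := fun k => dist (x k) (y k) ^ 2)
    (fun k _ => sq_nonneg _) (Finset.mem_univ i)

lemma meas_eval (d : ℕ) (i : Fin d) : Measurable (fun y : EuclideanSpace ℝ (Fin d) => y i) :=
  (EuclideanSpace.proj (𝕜 := ℝ) i).continuous.measurable

lemma measure_supBall_le (d : ℕ) (n : Fin d → ℕ) (hn : ∀ i, 1 ≤ n i)
    (L s : ℝ) (ϑ : Measure (EuclideanSpace ℝ (Fin d)))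
    (hfrost : ∀ (j : ℤ) (a : Fin d → ℤ),
      ϑ (dyadicBoxE d n j a) ≤ ENNReal.ofReal (L * ((2 : ℝ) ^ (-j : ℤ)) ^ s))
    (j : ℕ) (x : EuclideanSpace ℝ (Fin d)) :
    ϑ {y : EuclideanSpace ℝ (Fin d) | ∀ i, |x i - y i| < (2:ℝ)^(-(j:ℤ))} ≤
      ((∏ i, (2 * 2^((n i - 1)*j) + 1) : ℕ) : ℝ≥0∞)
        * ENNReal.ofReal (L * ((2:ℝ)^(-(j:ℤ)))^s) := by
  set M : Fin d → ℕ := fun i => 2^((n i - 1)*j) with hM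
  set a : Fin d → ℤ := fun i => ⌊x i * (2:ℝ) ^ ((n i : ℤ) * (j:ℤ))⌋ with ha
  set F : Finset (Fin d → ℤ) := Fintype.piFinset (fun i =>
    Finset.Icc (a i - M i) (a i + M i)) with hF
  have hMcast : ∀ i, (2:ℝ)^(-(j:ℤ)) * (2:ℝ)^((n i:ℤ)*(j:ℤ)) = ((M i : ℕ) : ℝ) := by
    intro i
    rw [← zpow_add₀ (by norm_num : (2:ℝ) ≠ 0)]
    have hc : ((n i - 1 : ℕ) : ℤ) = (n i : ℤ) - 1 := by
      exact_mod_cast Int.ofNat_sub (hn i)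
    have he : -(j:ℤ) + (n i:ℤ)*(j:ℤ) = (((n i - 1)*j : ℕ) : ℤ) := by
      push_cast [hc]; ring
    rw [he, zpow_natCast, hM]
    push_cast
    ring
  have hsub : {y : EuclideanSpace ℝ (Fin d) | ∀ i, |x i - y i| < (2:ℝ)^(-(j:ℤ))} ⊆
      ⋃ b ∈ F, dyadicBoxE d n (j:ℤ) b := by
    intro y hy
    refine Set.mem_biUnion ?_ (mem_box_floor d n (j:ℤ) y)
    refine Fintype.mem_piFinset.mpr ?_
    intro i
    rw [Finset.mem_Icc]
    have hpos : (0:ℝ) < (2:ℝ) ^ ((n i : ℤ) * (j:ℤ)) := zpow_pos (by norm_num) _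
    have key : |y i * (2:ℝ)^((n i:ℤ)*(j:ℤ)) - x i * (2:ℝ)^((n i:ℤ)*(j:ℤ))| < (M i : ℝ) := by
      rw [← sub_mul, abs_mul, abs_of_pos hpos, ← hMcast i]
      have hyi := hy i
      rw [abs_sub_comm] at hyi
      exact mul_lt_mul_of_pos_right hyi hpos
    obtain ⟨hl, hr⟩ := floor_range key
    exact ⟨hl, hr⟩
  calc ϑ {y : EuclideanSpace ℝ (Fin d) | ∀ i, |x i - y i| < (2:ℝ)^(-(j:ℤ))}
      ≤ ϑ (⋃ b ∈ F, dyadicBoxE d n (j:ℤ) b) := measure_mono hsub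
    _ ≤ ∑ b ∈ F, ϑ (dyadicBoxE d n (j:ℤ) b) := measure_biUnion_finset_le F _
    _ ≤ ∑ _b ∈ F, ENNReal.ofReal (L * ((2:ℝ)^(-(j:ℤ)))^s) :=
        Finset.sum_le_sum (fun b _ => hfrost (j:ℤ) b)
    _ = (F.card : ℝ≥0∞) * ENNReal.ofReal (L * ((2:ℝ)^(-(j:ℤ)))^s) := by
        rw [Finset.sum_const, nsmul_eq_mul]
    _ = _ := by
        congr 1
        rw [hF, Fintype.card_piFinset]
        norm_cast
        apply Finset.prod_congr rfl
        intro i _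
        rw [Int.card_Icc]
        have hMi : M i = 2 ^ ((n i - 1) * j) := rfl
        omega

end Stmt8Aux

set_option maxHeartbeats 1000000 in
theorem stmt8 (d : ℕ) (n : Fin d → ℕ) (hn : ∀ i, 1 ≤ n i)
    (S : ℕ) (hS : S = ∑ i, n i) (L σ s : ℝ) (hL : 0 ≤ L)
    (hσ0 : 0 < σ) (hσd : σ < d) (hs : σ + (S : ℝ) - (d : ℝ) < s)
    (ϑ : Measure (EuclideanSpace ℝ (Fin d)))
    (hsupp : ϑ {x : EuclideanSpace ℝ (Fin d) | ∀ i, x i ∈ Set.Icc (0 : ℝ) 1}ᶜ = 0)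
    (hmass : ϑ Set.univ ≤ 1)
    (hfrost : ∀ (j : ℤ) (a : Fin d → ℤ),
      ϑ (dyadicBoxE d n j a) ≤ ENNReal.ofReal (L * ((2 : ℝ) ^ (-j : ℤ)) ^ s)) :
    ∫⁻ x, ∫⁻ y, edist x y ^ (-σ) ∂ϑ ∂ϑ ≤
      ENNReal.ofReal (6 ^ d * L / (1 - 2 ^ (σ + (S : ℝ) - (d : ℝ) - s))) := by
  classical
  have hdS : d ≤ S := by
    rw [hS]
    calc d = ∑ _i : Fin d, 1 := by simp
    _ ≤ ∑ i, n i := Finset.sum_le_sum (fun i _ => hn i)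
  have hs0 : 0 < s := by
    have h1 : (d:ℝ) ≤ S := by exact_mod_cast hdS
    linarith
  set q : ℝ := (2:ℝ)^(σ + (S:ℝ) - (d:ℝ) - s) with hq
  have hq0 : 0 < q := Real.rpow_pos_of_pos two_pos _
  have hq1 : q < 1 := Real.rpow_lt_one_of_one_lt_of_neg one_lt_two (by linarith)
  set K : Set (EuclideanSpace ℝ (Fin d)) := {x | ∀ i, x i ∈ Set.Icc (0:ℝ) 1} with hK
  have hKmeas : MeasurableSet K := by
    have hKi : K = ⋂ i, (fun y : EuclideanSpace ℝ (Fin d) => y i) ⁻¹' (Set.Icc (0:ℝ) 1) := by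
      ext z; simp [hK, Set.mem_iInter]
    rw [hKi]
    exact MeasurableSet.iInter (fun i => (Stmt8Aux.meas_eval d i) measurableSet_Icc)
  set T : ℕ → EuclideanSpace ℝ (Fin d) → Set (EuclideanSpace ℝ (Fin d)) :=
    fun j x => {y | ∀ i, |x i - y i| < (2:ℝ)^(-(j:ℤ))} with hT
  have hTmeas : ∀ jj xx, MeasurableSet (T jj xx) := by
    intro jj xx
    have h1 : T jj xx = ⋂ i, {y : EuclideanSpace ℝ (Fin d) | |xx i - y i| < (2:ℝ)^(-(jj:ℤ))} := by
      ext z; simp [hT, Set.mem_iInter]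
    rw [h1]
    refine MeasurableSet.iInter (fun i => ?_)
    have hm : Measurable (fun y : EuclideanSpace ℝ (Fin d) => |xx i - y i|) :=
      ((Stmt8Aux.meas_eval d i).const_sub (xx i)).abs
    exact measurableSet_lt hm measurable_const
  -- no atoms
  have hatom : ∀ x : EuclideanSpace ℝ (Fin d), ϑ {x} = 0 := by
    intro x
    have hb : ∀ jj : ℕ, ϑ {x} ≤ ENNReal.ofReal (L * ((2:ℝ)^(-s))^jj) := by
      intro jj
      have h1 : ϑ {x} ≤ ENNReal.ofReal (L * ((2:ℝ)^(-(jj:ℤ)))^s) := by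
        refine le_trans (measure_mono ?_)
          (hfrost (jj:ℤ) (fun i => ⌊x i * (2:ℝ) ^ ((n i : ℤ) * (jj:ℤ))⌋))
        intro z hz
        rw [Set.mem_singleton_iff] at hz; subst hz
        exact Stmt8Aux.mem_box_floor d n (jj:ℤ) z
      have h2 : ((2:ℝ)^(-(jj:ℤ)))^s = ((2:ℝ)^(-s))^(jj:ℕ) := by
        rw [← Real.rpow_natCast ((2:ℝ)^(-s)) jj, ← Real.rpow_intCast 2 (-(jj:ℤ)),
            ← Real.rpow_mul (by norm_num : (0:ℝ) ≤ 2), ← Real.rpow_mul (by norm_num : (0:ℝ) ≤ 2)]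
        congr 1
        push_cast
        ring
      rw [h2] at h1
      exact h1
    have hr0 : (0:ℝ) ≤ (2:ℝ)^(-s) := (Real.rpow_pos_of_pos two_pos _).le
    have hr1 : (2:ℝ)^(-s) < 1 := Real.rpow_lt_one_of_one_lt_of_neg one_lt_two (by linarith)
    have htend : Filter.Tendsto (fun jj : ℕ => ENNReal.ofReal (L * ((2:ℝ)^(-s))^jj))
        Filter.atTop (nhds 0) := by
      have h1 : Filter.Tendsto (fun jj : ℕ => L * ((2:ℝ)^(-s))^jj) Filter.atTop (nhds 0) := by
        have h2 := tendsto_pow_atTop_nhds_zero_of_lt_one hr0 hr1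
        simpa using h2.const_mul L
      have h3 := (ENNReal.continuous_ofReal.tendsto 0).comp h1
      simpa [Function.comp_def] using h3
    exact le_antisymm (ge_of_tendsto' htend hb) (by simp)
  -- mass of K
  have hKmass : ϑ K ≤ ENNReal.ofReal (2^d * L) := by
    set F0 : Finset (Fin d → ℤ) := Fintype.piFinset (fun _ => ({0,1} : Finset ℤ)) with hF0
    have hsub : K ⊆ ⋃ b ∈ F0, dyadicBoxE d n 0 b := by
      intro z hz
      refine Set.mem_biUnion ?_ (Stmt8Aux.mem_box_floor d n 0 z)
      refine Fintype.mem_piFinset.mpr ?_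
      intro i
      have h1 : z i ∈ Set.Icc (0:ℝ) 1 := hz i
      have h2 : ⌊z i * (2:ℝ)^((n i:ℤ)*0)⌋ = ⌊z i⌋ := by norm_num
      simp only [h2]
      have h3 : 0 ≤ ⌊z i⌋ := Int.floor_nonneg.mpr h1.1
      have h4 : ⌊z i⌋ ≤ 1 := by
        have h5 : ⌊z i⌋ ≤ ⌊(1:ℝ)⌋ := Int.floor_le_floor h1.2
        simpa using h5
      simp only [Finset.mem_insert, Finset.mem_singleton]
      omega
    calc ϑ K ≤ ϑ (⋃ b ∈ F0, dyadicBoxE d n 0 b) := measure_mono hsub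
      _ ≤ ∑ b ∈ F0, ϑ (dyadicBoxE d n 0 b) := measure_biUnion_finset_le _ _
      _ ≤ ∑ _b ∈ F0, ENNReal.ofReal L := by
          refine Finset.sum_le_sum (fun b _ => ?_)
          have h1 := hfrost 0 b
          simpa using h1
      _ = (F0.card : ℝ≥0∞) * ENNReal.ofReal L := by rw [Finset.sum_const, nsmul_eq_mul]
      _ ≤ ENNReal.ofReal (2^d * L) := by
          have hc : F0.card = 2^d := by
            rw [hF0, Fintype.card_piFinset]
            simp
          rw [hc, ENNReal.ofReal_mul (by positivity : (0:ℝ) ≤ (2:ℝ)^d)]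
          apply mul_le_mul_left
          rw [← ENNReal.ofReal_natCast (2^d)]
          apply ENNReal.ofReal_le_ofReal
          push_cast
          norm_num
  -- coefficients and comparison function
  set C : ℕ → ℝ≥0∞ := fun jj => ENNReal.ofReal ((2:ℝ)^(((jj:ℝ)+1)*σ)) with hC
  set G : EuclideanSpace ℝ (Fin d) → EuclideanSpace ℝ (Fin d) → ℝ≥0∞ := fun x y =>
    (K \ T 0 x).indicator (fun _ => ENNReal.ofReal ((2:ℝ)^σ)) y
      + ∑' jj : ℕ, (T jj x).indicator (fun _ => C jj) y with hG
  have hzr : ∀ (m : ℤ) (t : ℝ), ((2:ℝ)^m)^t = (2:ℝ)^((m:ℝ)*t) := by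
    intro m t
    rw [← Real.rpow_intCast 2 m, ← Real.rpow_mul (by norm_num : (0:ℝ) ≤ 2)]
  have hlow : ∀ (x y : EuclideanSpace ℝ (Fin d)) (c : ℝ), 0 < c →
      (∃ i, c ≤ |x i - y i|) → edist x y ^ (-σ) ≤ ENNReal.ofReal (c ^ (-σ)) := by
    rintro x y c hc ⟨i, hi⟩
    have h1 : ENNReal.ofReal c ≤ edist x y := by
      rw [edist_dist]
      exact ENNReal.ofReal_le_ofReal (hi.trans (Stmt8Aux.coord_le_dist d x y i))
    rw [← ENNReal.ofReal_rpow_of_pos hc, ENNReal.rpow_neg, ENNReal.rpow_neg]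
    exact ENNReal.inv_le_inv.mpr (ENNReal.rpow_le_rpow h1 hσ0.le)
  have hpoint : ∀ x ∈ K, ∀ y ∈ K, y ≠ x → edist x y ^ (-σ) ≤ G x y := by
    intro x hx y hy hyx
    by_cases hy0 : y ∈ T 0 x
    · have hne : ∃ i, x i ≠ y i := by
        by_contra hcon
        push_neg at hcon
        exact hyx (PiLp.ext fun i => (hcon i).symm)
      obtain ⟨i, hi⟩ := hne
      have hci : 0 < |x i - y i| := abs_pos.mpr (sub_ne_zero.mpr hi)
      obtain ⟨j0, hj0⟩ := exists_pow_lt_of_lt_one hci (by norm_num : (1/2:ℝ) < 1)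
      have hj0' : (2:ℝ)^(-(j0:ℤ)) ≤ |x i - y i| := by
        have h1 : (2:ℝ)^(-(j0:ℤ)) = (1/2:ℝ)^j0 := by
          rw [zpow_neg, zpow_natCast, one_div, inv_pow]
        rw [h1]; exact hj0.le
      set P : ℕ → Prop := fun jj => y ∈ T jj x with hP
      set k := Nat.findGreatest P j0 with hk
      have hPk : P k := Nat.findGreatest_spec (Nat.zero_le j0) hy0
      have hkj0 : k < j0 := by
        rcases Nat.lt_or_ge k j0 with h | h
        · exact h
        · exfalso
          have hkeq : k = j0 := le_antisymm (Nat.findGreatest_le j0) h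
          have h1 := hPk
          rw [hkeq] at h1
          simp only [hP, hT, Set.mem_setOf_eq] at h1
          exact absurd (h1 i) (not_lt.mpr hj0')
      have hnot : ¬ P (k+1) :=
        Nat.findGreatest_is_greatest (Nat.lt_succ_self k) hkj0
      have hex : ∃ i', (2:ℝ)^(-((k:ℤ)+1)) ≤ |x i' - y i'| := by
        simp only [hP, hT, Set.mem_setOf_eq] at hnot
        push_neg at hnot
        obtain ⟨i', hi'⟩ := hnot
        refine ⟨i', ?_⟩
        exact_mod_cast hi'
      have hcpos : (0:ℝ) < (2:ℝ)^(-((k:ℤ)+1)) := zpow_pos (by norm_num) _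
      have hmain := hlow x y _ hcpos hex
      have hval : ((2:ℝ)^(-((k:ℤ)+1)))^(-σ) = (2:ℝ)^(((k:ℝ)+1)*σ) := by
        rw [hzr]; congr 1; push_cast; ring
      rw [hval] at hmain
      calc edist x y ^ (-σ) ≤ ENNReal.ofReal ((2:ℝ)^(((k:ℝ)+1)*σ)) := hmain
        _ = (T k x).indicator (fun _ => C k) y := by
            rw [Set.indicator_of_mem hPk]
        _ ≤ ∑' jj, (T jj x).indicator (fun _ => C jj) y := ENNReal.le_tsum k
        _ ≤ G x y := self_le_add_left _ _
    · have hex : ∃ i', (1:ℝ) ≤ |x i' - y i'| := by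
        simp only [hT, Set.mem_setOf_eq] at hy0
        push_neg at hy0
        obtain ⟨i', hi'⟩ := hy0
        refine ⟨i', ?_⟩
        simpa using hi'
      have hmain := hlow x y 1 one_pos hex
      rw [Real.one_rpow] at hmain
      have h2 : edist x y ^ (-σ) ≤ ENNReal.ofReal ((2:ℝ)^σ) := by
        refine hmain.trans (ENNReal.ofReal_le_ofReal ?_)
        calc (1:ℝ) = (2:ℝ)^(0:ℝ) := (Real.rpow_zero 2).symm
          _ ≤ (2:ℝ)^σ := Real.rpow_le_rpow_of_exponent_le one_le_two hσ0.le
      have hmem : y ∈ K \ T 0 x := ⟨hy, hy0⟩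
      calc edist x y ^ (-σ) ≤ ENNReal.ofReal ((2:ℝ)^σ) := h2
        _ = (K \ T 0 x).indicator (fun _ => ENNReal.ofReal ((2:ℝ)^σ)) y :=
            (Set.indicator_of_mem hmem (fun _ => ENNReal.ofReal ((2:ℝ)^σ))).symm
        _ ≤ G x y := self_le_add_right _ _
  have hGmeas : ∀ x, Measurable (G x) := by
    intro x
    refine Measurable.add ?_ ?_
    · exact measurable_const.indicator (hKmeas.diff (hTmeas 0 x))
    · exact Measurable.ennreal_tsum (fun jj => measurable_const.indicator (hTmeas jj x))
  -- geometric data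
  set D : ℕ := ∑ i, (n i - 1) with hD
  have hDS : (D:ℝ) = (S:ℝ) - d := by
    have h1 : ∑ i, (n i - 1) + ∑ _i : Fin d, 1 = ∑ i, n i := by
      rw [← Finset.sum_add_distrib]
      exact Finset.sum_congr rfl (fun i _ => by have := hn i; omega)
    have h2 : D + d = S := by
      rw [hD, hS]
      simpa using h1
    have h3 : (D:ℝ) + d = S := by exact_mod_cast h2
    linarith
  have hcount : ∀ jj : ℕ, ((∏ i, (2*2^((n i - 1)*jj) + 1) : ℕ) : ℝ) ≤ 3^d * 2^(D*jj) := by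
    intro jj
    have hN : (∏ i, (2*2^((n i - 1)*jj) + 1) : ℕ) ≤ 3^d * 2^(D*jj) := by
      calc (∏ i, (2*2^((n i - 1)*jj) + 1) : ℕ) ≤ ∏ i, 3 * 2^((n i - 1)*jj) := by
            refine Finset.prod_le_prod' (fun i _ => ?_)
            have h1 : 1 ≤ 2^((n i - 1)*jj) := Nat.one_le_two_pow
            omega
        _ = 3^d * 2^(D*jj) := by
            rw [Finset.prod_mul_distrib, Finset.prod_const, Finset.prod_pow_eq_pow_sum]
            simp [hD, Finset.sum_mul]
    calc ((∏ i, (2*2^((n i - 1)*jj) + 1) : ℕ) : ℝ) ≤ ((3^d * 2^(D*jj) : ℕ) : ℝ) := by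
          exact_mod_cast hN
      _ = 3^d * 2^(D*jj) := by push_cast; ring
  have hball : ∀ (jj : ℕ) (x : EuclideanSpace ℝ (Fin d)),
      ϑ (T jj x) ≤ ENNReal.ofReal ((3:ℝ)^d * L * (2:ℝ)^((D:ℝ)*jj - jj*s)) := by
    intro jj x
    have h1 := Stmt8Aux.measure_supBall_le d n hn L s ϑ hfrost jj x
    refine le_trans h1 ?_
    have hc0 : 0 ≤ L * ((2:ℝ)^(-(jj:ℤ)))^s :=
      mul_nonneg hL (Real.rpow_nonneg (by positivity) s)
    rw [← ENNReal.ofReal_natCast, ← ENNReal.ofReal_mul (by positivity)]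
    apply ENNReal.ofReal_le_ofReal
    have h2 : ((∏ i, (2*2^((n i - 1)*jj) + 1) : ℕ) : ℝ) * (L * ((2:ℝ)^(-(jj:ℤ)))^s)
        ≤ (3^d * 2^(D*jj)) * (L * ((2:ℝ)^(-(jj:ℤ)))^s) :=
      mul_le_mul_of_nonneg_right (hcount jj) hc0
    refine h2.trans (le_of_eq ?_)
    have e1 : ((2:ℝ)^(-(jj:ℤ)))^s = (2:ℝ)^(-((jj:ℝ))*s) := by
      rw [hzr]; congr 1; push_cast; ring
    have e2 : ((2:ℝ):ℝ)^(D*jj) = (2:ℝ)^(((D*jj:ℕ):ℝ)) := by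
      rw [Real.rpow_natCast]
    calc (3^d * 2^(D*jj)) * (L * ((2:ℝ)^(-(jj:ℤ)))^s)
        = 3^d * L * ((2:ℝ)^(((D*jj:ℕ):ℝ)) * (2:ℝ)^(-((jj:ℝ))*s)) := by
          rw [e1, ← e2]; ring
      _ = (3:ℝ)^d * L * (2:ℝ)^((D:ℝ)*jj - jj*s) := by
          rw [← Real.rpow_add two_pos]
          congr 1
          push_cast
          ring
  have hcoef : ∀ t : ℝ, (2:ℝ)^((t+1)*σ) * ((3:ℝ)^d * L * (2:ℝ)^((D:ℝ)*t - t*s))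
      = (2:ℝ)^σ * 3^d * L * (2:ℝ)^((σ + (S:ℝ) - (d:ℝ) - s)*t) := by
    intro t
    calc (2:ℝ)^((t+1)*σ) * ((3:ℝ)^d * L * (2:ℝ)^((D:ℝ)*t - t*s))
        = 3^d * L * ((2:ℝ)^((t+1)*σ) * (2:ℝ)^((D:ℝ)*t - t*s)) := by ring
      _ = 3^d * L * (2:ℝ)^((t+1)*σ + ((D:ℝ)*t - t*s)) := by rw [← Real.rpow_add two_pos]
      _ = 3^d * L * ((2:ℝ)^σ * (2:ℝ)^((σ + (S:ℝ) - (d:ℝ) - s)*t)) := by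
          rw [← Real.rpow_add two_pos]
          congr 1
          rw [hDS]
          ring
      _ = (2:ℝ)^σ * 3^d * L * (2:ℝ)^((σ + (S:ℝ) - (d:ℝ) - s)*t) := by ring
  have htermeq : ∀ jj : ℕ,
      C (jj+1) * ENNReal.ofReal ((3:ℝ)^d * L * (2:ℝ)^((D:ℝ)*((jj+1:ℕ):ℝ) - ((jj+1:ℕ):ℝ)*s))
      = ENNReal.ofReal ((2:ℝ)^σ * 3^d * L * q^(jj+1)) := by
    intro jj
    rw [hC]
    rw [← ENNReal.ofReal_mul (by positivity)]
    congr 1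
    have e3 : q^(jj+1) = (2:ℝ)^((σ + (S:ℝ) - (d:ℝ) - s)*(((jj+1:ℕ)):ℝ)) := by
      rw [hq, ← Real.rpow_natCast ((2:ℝ)^(σ + (S:ℝ) - (d:ℝ) - s)) (jj+1),
          ← Real.rpow_mul (by norm_num : (0:ℝ) ≤ 2)]
    rw [e3]
    exact hcoef ((jj+1:ℕ):ℝ)
  set Tot : ℝ≥0∞ := ENNReal.ofReal ((2:ℝ)^σ * (2^d * L))
      + ∑' jj : ℕ, ENNReal.ofReal ((2:ℝ)^σ * 3^d * L * q^(jj+1)) with hTot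
  have hinner : ∀ x ∈ K, ∫⁻ y, edist x y ^ (-σ) ∂ϑ ≤ Tot := by
    intro x hx
    have hstep1 : ∫⁻ y, edist x y ^ (-σ) ∂ϑ = ∫⁻ y in K, edist x y ^ (-σ) ∂ϑ := by
      rw [← lintegral_add_compl (fun y => edist x y ^ (-σ)) hKmeas,
          setLIntegral_measure_zero _ _ hsupp, add_zero]
    have hKae : K =ᵐ[ϑ] (K \ ({x} : Set (EuclideanSpace ℝ (Fin d)))) := by
      refine MeasureTheory.ae_eq_set.mpr ⟨?_, ?_⟩
      · refine measure_mono_null ?_ (hatom x)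
        intro z hz
        by_contra hne
        exact hz.2 ⟨hz.1, hne⟩
      · have he : ((K \ {x}) \ K : Set (EuclideanSpace ℝ (Fin d))) = ∅ := by
          ext z
          simp only [Set.mem_diff, Set.mem_empty_iff_false, iff_false]
          tauto
        refine measure_mono_null (fun z hz => ?_) measure_empty
        exact absurd hz.1.1 hz.2
    have hstep2 : ∫⁻ y in K, edist x y ^ (-σ) ∂ϑ = ∫⁻ y in K \ {x}, edist x y ^ (-σ) ∂ϑ :=
      setLIntegral_congr hKae
    have hstep3 : ∫⁻ y in K \ {x}, edist x y ^ (-σ) ∂ϑ ≤ ∫⁻ y in K \ {x}, G x y ∂ϑ := by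
      refine setLIntegral_mono (hGmeas x) ?_
      intro y hy
      exact hpoint x hx y hy.1 (by simpa using hy.2)
    have hexp : ∫⁻ y in K \ {x}, G x y ∂ϑ =
        ENNReal.ofReal ((2:ℝ)^σ) * ϑ ((K \ T 0 x) ∩ (K \ {x}))
          + ∑' jj : ℕ, C jj * ϑ (T jj x ∩ (K \ {x})) := by
      rw [hG]
      rw [lintegral_add_left (measurable_const.indicator (hKmeas.diff (hTmeas 0 x)))]
      congr 1
      · rw [lintegral_indicator_const (hKmeas.diff (hTmeas 0 x)),
            Measure.restrict_apply (hKmeas.diff (hTmeas 0 x))]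
      · rw [lintegral_tsum (fun jj => (measurable_const.indicator (hTmeas jj x)).aemeasurable)]
        refine tsum_congr (fun jj => ?_)
        rw [lintegral_indicator_const (hTmeas jj x), Measure.restrict_apply (hTmeas jj x)]
    have hsplit : (∑' jj : ℕ, C jj * ϑ (T jj x ∩ (K \ {x})))
        = C 0 * ϑ (T 0 x ∩ (K \ {x})) + ∑' jj : ℕ, C (jj+1) * ϑ (T (jj+1) x ∩ (K \ {x})) :=
      tsum_eq_zero_add' ENNReal.summable
    have hC0 : C 0 = ENNReal.ofReal ((2:ℝ)^σ) := by
      rw [hC]; norm_num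
    have hzero : ENNReal.ofReal ((2:ℝ)^σ) * ϑ ((K \ T 0 x) ∩ (K \ {x}))
        + C 0 * ϑ (T 0 x ∩ (K \ {x})) ≤ ENNReal.ofReal ((2:ℝ)^σ * (2^d * L)) := by
      rw [hC0, ← mul_add]
      have hseteq : ((K \ T 0 x) ∩ (K \ {x})) = (K \ {x}) \ T 0 x := by
        ext z
        simp only [Set.mem_diff, Set.mem_inter_iff, Set.mem_singleton_iff]
        tauto
      have hseteq2 : (T 0 x ∩ (K \ {x})) = (K \ {x}) ∩ T 0 x := Set.inter_comm _ _
      rw [hseteq, hseteq2, add_comm (ϑ ((K \ {x}) \ T 0 x)) (ϑ ((K \ {x}) ∩ T 0 x)),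
          measure_inter_add_diff (K \ {x}) (hTmeas 0 x)]
      have h1 : ϑ (K \ {x}) ≤ ENNReal.ofReal (2^d * L) :=
        le_trans (measure_mono Set.diff_subset) hKmass
      calc ENNReal.ofReal ((2:ℝ)^σ) * ϑ (K \ {x})
          ≤ ENNReal.ofReal ((2:ℝ)^σ) * ENNReal.ofReal (2^d * L) := mul_le_mul_right h1 _
        _ = ENNReal.ofReal ((2:ℝ)^σ * (2^d * L)) := by
            rw [← ENNReal.ofReal_mul (by positivity)]
    have htail : ∀ jj : ℕ, C (jj+1) * ϑ (T (jj+1) x ∩ (K \ {x}))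
        ≤ ENNReal.ofReal ((2:ℝ)^σ * 3^d * L * q^(jj+1)) := by
      intro jj
      rw [← htermeq jj]
      refine mul_le_mul_right ?_ _
      exact le_trans (measure_mono Set.inter_subset_left) (hball (jj+1) x)
    calc ∫⁻ y, edist x y ^ (-σ) ∂ϑ
        = ∫⁻ y in K \ {x}, edist x y ^ (-σ) ∂ϑ := by rw [hstep1, hstep2]
      _ ≤ ∫⁻ y in K \ {x}, G x y ∂ϑ := hstep3
      _ = ENNReal.ofReal ((2:ℝ)^σ) * ϑ ((K \ T 0 x) ∩ (K \ {x}))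
            + ∑' jj : ℕ, C jj * ϑ (T jj x ∩ (K \ {x})) := hexp
      _ = (ENNReal.ofReal ((2:ℝ)^σ) * ϑ ((K \ T 0 x) ∩ (K \ {x}))
            + C 0 * ϑ (T 0 x ∩ (K \ {x})))
            + ∑' jj : ℕ, C (jj+1) * ϑ (T (jj+1) x ∩ (K \ {x})) := by
          rw [hsplit, add_assoc]
      _ ≤ ENNReal.ofReal ((2:ℝ)^σ * (2^d * L))
            + ∑' jj : ℕ, ENNReal.ofReal ((2:ℝ)^σ * 3^d * L * q^(jj+1)) :=
          add_le_add hzero (ENNReal.tsum_le_tsum htail)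
      _ = Tot := by rw [hTot]
  have houter : ∫⁻ x, ∫⁻ y, edist x y ^ (-σ) ∂ϑ ∂ϑ ≤ Tot := by
    have h1 : ∫⁻ x, ∫⁻ y, edist x y ^ (-σ) ∂ϑ ∂ϑ
        = ∫⁻ x in K, ∫⁻ y, edist x y ^ (-σ) ∂ϑ ∂ϑ := by
      rw [← lintegral_add_compl (fun x => ∫⁻ y, edist x y ^ (-σ) ∂ϑ) hKmeas,
          setLIntegral_measure_zero _ _ hsupp, add_zero]
    rw [h1]
    calc ∫⁻ x in K, ∫⁻ y, edist x y ^ (-σ) ∂ϑ ∂ϑ ≤ ∫⁻ _x in K, Tot ∂ϑ :=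
          setLIntegral_mono measurable_const hinner
      _ = Tot * ϑ K := setLIntegral_const K Tot
      _ ≤ Tot * 1 := mul_le_mul_right (le_trans (measure_mono (Set.subset_univ K)) hmass) Tot
      _ = Tot := mul_one Tot
  refine houter.trans ?_
  have h1q : (0:ℝ) < 1 - q := by linarith
  have hsummable : Summable (fun jj : ℕ => (2:ℝ)^σ * 3^d * L * q^(jj+1)) := by
    have h1 : Summable (fun jj : ℕ => q^jj) := summable_geometric_of_lt_one hq0.le hq1
    have h2 := h1.mul_left ((2:ℝ)^σ * 3^d * L * q)
    refine h2.congr (fun jj => ?_)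
    ring
  have htsum : (∑' jj : ℕ, ENNReal.ofReal ((2:ℝ)^σ * 3^d * L * q^(jj+1)))
      = ENNReal.ofReal ((2:ℝ)^σ * 3^d * L * q * (1-q)⁻¹) := by
    rw [← ENNReal.ofReal_tsum_of_nonneg
      (fun jj => mul_nonneg (mul_nonneg (mul_nonneg (Real.rpow_nonneg (by norm_num) σ)
        (by positivity)) hL) (pow_nonneg hq0.le _)) hsummable]
    congr 1
    have h2 : (∑' jj : ℕ, (2:ℝ)^σ * 3^d * L * q^(jj+1))
        = ∑' jj : ℕ, ((2:ℝ)^σ * 3^d * L * q) * q^jj := tsum_congr (fun jj => by ring)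
    rw [h2, tsum_mul_left, tsum_geometric_of_lt_one hq0.le hq1]
  have hA0 : 0 ≤ (2:ℝ)^σ * (2^d * L) :=
    mul_nonneg (Real.rpow_nonneg (by norm_num) σ) (mul_nonneg (by positivity) hL)
  have hB0 : 0 ≤ (2:ℝ)^σ * 3^d * L * q * (1-q)⁻¹ :=
    mul_nonneg (mul_nonneg (mul_nonneg (mul_nonneg (Real.rpow_nonneg (by norm_num) σ)
      (by positivity)) hL) hq0.le) (by positivity)
  rw [hTot, htsum, ← ENNReal.ofReal_add hA0 hB0]
  apply ENNReal.ofReal_le_ofReal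
  rw [le_div_iff₀ h1q]
  have h2σ : (2:ℝ)^σ ≤ 2^d := by
    have h1 := Real.rpow_le_rpow_of_exponent_le one_le_two hσd.le
    rwa [Real.rpow_natCast] at h1
  have h23 : (2:ℝ)^d ≤ 3^d := pow_le_pow_left₀ (by norm_num) (by norm_num) d
  have h6 : (6:ℝ)^d = 2^d * 3^d := by rw [← mul_pow]; norm_num
  have hinv : ((2:ℝ)^σ*3^d*L*q*(1-q)⁻¹)*(1-q) = 2^σ*3^d*L*q := by
    field_simp
  have expand : ((2:ℝ)^σ * (2^d*L) + (2:ℝ)^σ*3^d*L*q*(1-q)⁻¹) * (1-q)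
      = (2:ℝ)^σ*(2^d*L*(1-q)) + ((2:ℝ)^σ*3^d*L*q*(1-q)⁻¹)*(1-q) := by ring
  rw [expand, hinv, h6]
  have s1 : (2:ℝ)^σ*(2^d*L*(1-q)) ≤ 2^d*(2^d*L*(1-q)) :=
    mul_le_mul_of_nonneg_right h2σ
      (mul_nonneg (mul_nonneg (by positivity) hL) h1q.le)
  have s2 : (2:ℝ)^σ*3^d*L*q ≤ 2^d*(3^d*L*q) := by
    have e : (2:ℝ)^σ*3^d*L*q = 2^σ*(3^d*L*q) := by ring
    rw [e]
    exact mul_le_mul_of_nonneg_right h2σ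
      (mul_nonneg (mul_nonneg (by positivity) hL) hq0.le)
  have s3 : (2:ℝ)^d*(2^d*L*(1-q)) ≤ 2^d*(3^d*L*(1-q)) := by
    apply mul_le_mul_of_nonneg_left _ (by positivity : (0:ℝ) ≤ 2^d)
    have e : (2:ℝ)^d*L*(1-q) = L*(1-q)*2^d := by ring
    have e2 : (3:ℝ)^d*L*(1-q) = L*(1-q)*3^d := by ring
    rw [e, e2]
    exact mul_le_mul_of_nonneg_left h23 (mul_nonneg hL h1q.le)
  nlinarith [s1, s2, s3]



end
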